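/- Dimension lower bound for growth: Let 𝕂 be a field, G a group, and S ⊆ G a finite subset such that S ∪ S⁻¹ generates G. Let ϖ denote the augmentation ideal of the group algebra 𝕂[G], namely the kernel of the 𝕂-algebra homomorphism 𝕂[G] → 𝕂 sending every g ∈ G to 1, and set ϖ⁰ = 𝕂[G]. Then for every n ∈ ℕ, each quotient ϖ^i/ϖ^{i+1} for 0 ≤ i ≤ n is a finite-dimensional 𝕂-vector space, and v_{G,S∪S⁻¹}(n) ≥ Σ_{i=0}^{n} dim_𝕂(ϖ^i/ϖ^{i+1}). -/

import Mathlib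

/-- The word norm of `g` with respect to a generating set `S`. -/
noncomputable def wordNorm {G : Type*} [Group G] (S : Set G) (g : G) : ℕ :=
  sInf {n | ∃ l : List G, (∀ s ∈ l, s ∈ S) ∧ l.length = n ∧ l.prod = g}

/-- The growth function `v_{G,S}(n) = #{g : ‖g‖_S ≤ n}`. -/
noncomputable def growthFn {G : Type*} [Group G] (S : Set G) (n : ℕ) : ℕ :=
  Nat.card {g : G // wordNorm S g ≤ n}

/-- The augmentation map `𝕂[G] → 𝕂`, the algebra homomorphism sending each `g ∈ G` to `1`. -/
noncomputable def augmentation (𝕂 G : Type*) [Field 𝕂] [Group G] :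
    MonoidAlgebra 𝕂 G →ₐ[𝕂] 𝕂 :=
  (MonoidAlgebra.lift 𝕂 𝕂 G) 1

/-- `augPow 𝕂 G n` is the `n`-th power `ϖ^n` of the augmentation ideal
`ϖ = ker(𝕂[G] → 𝕂)` (as a `𝕂`-submodule of `𝕂[G]`), with the convention `ϖ⁰ = 𝕂[G]`. -/
noncomputable def augPow (𝕂 G : Type*) [Field 𝕂] [Group G] (n : ℕ) :
    Submodule 𝕂 (MonoidAlgebra 𝕂 G) :=
  if n = 0 then ⊤ else (LinearMap.ker (augmentation 𝕂 G).toLinearMap) ^ n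

/-- The quotient `ϖ^i / ϖ^{i+1}` as a `𝕂`-module. -/
noncomputable abbrev augQuot (𝕂 G : Type*) [Field 𝕂] [Group G] (i : ℕ) :=
  ↥(augPow 𝕂 G i) ⧸ Submodule.comap (augPow 𝕂 G i).subtype (augPow 𝕂 G (i + 1))

/-!
Modulo `ϖ^{n+1}`, the group algebra is spanned by the ball `B_n` of radius `n` of the word
metric. Indeed, writing `s g = g + (s - 1) g` with `s - 1 ∈ ϖ`, an induction on `n` (inside it,
on the length of a word for `g`) gives `span B_n + ϖ^{n+1} = 𝕂[G]`. Hence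
`dim 𝕂[G]/ϖ^{n+1} ≤ #B_n = v(n)`, and this dimension is the sum of `dim ϖ^i/ϖ^{i+1}` over `i ≤ n`.
-/

open Module

namespace Submodule

section Ring

variable {R M : Type*} [Ring R] [AddCommGroup M] [Module R M]

noncomputable def quotientComapSubtypeEquivMapMkQ (p q : Submodule R M) :
    (p ⧸ q.comap p.subtype) ≃ₗ[R] p.map q.mkQ :=
  quotEquivOfEq _ _ (by rw [LinearMap.ker_comp, ker_mkQ]) ≪≫ₗ
    (q.mkQ ∘ₗ p.subtype).quotKerEquivRange ≪≫ₗ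
    LinearEquiv.ofEq _ _ (by rw [LinearMap.range_comp, range_subtype])

end Ring

section DivisionRing

variable {K V : Type*} [DivisionRing K] [AddCommGroup V] [Module K V]

instance finiteDimensional_quotient_comap_subtype (p q : Submodule K V)
    [FiniteDimensional K (V ⧸ q)] : FiniteDimensional K (p ⧸ q.comap p.subtype) :=
  (quotientComapSubtypeEquivMapMkQ p q).symm.finiteDimensional

theorem finrank_quotient_eq_finrank_quotient_comap_add {p q : Submodule K V} (h : q ≤ p)
    [FiniteDimensional K (V ⧸ q)] :
    finrank K (V ⧸ q) = finrank K (p ⧸ q.comap p.subtype) + finrank K (V ⧸ p) := by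
  rw [(quotientComapSubtypeEquivMapMkQ p q).finrank_eq,
    ← (quotientQuotientEquivQuotient q p h).finrank_eq, add_comm, finrank_quotient_add_finrank]

theorem sum_finrank_quotient_comap_eq_finrank_quotient {p : ℕ → Submodule K V}
    (hp : Antitone p) (h0 : p 0 = ⊤) (hfd : ∀ i, FiniteDimensional K (V ⧸ p i)) (m : ℕ) :
    ∑ i ∈ Finset.range m, finrank K (p i ⧸ (p (i + 1)).comap (p i).subtype) =
      finrank K (V ⧸ p m) := by
  induction m with
  | zero => rw [h0, finrank_zero_of_subsingleton, Finset.sum_range_zero]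
  | succ m ih =>
    rw [Finset.sum_range_succ, ih, finrank_quotient_eq_finrank_quotient_comap_add (hp m.le_succ),
      add_comm]

end DivisionRing

theorem pow_succ_succ_le_pow_succ {R A : Type*} [CommSemiring R] [Semiring A] [Algebra R A]
    {M : Submodule R A} (h : M * M ≤ M) (n : ℕ) : M ^ (n + 2) ≤ M ^ (n + 1) :=
  calc M ^ (n + 2) = M ^ n * (M * M) := by rw [Submodule.pow_succ, Submodule.pow_succ, mul_assoc]
    _ ≤ M ^ n * M := mul_le_mul_right h _

end Submodule

section Augmentation

variable (𝕂 G : Type*) [Field 𝕂] [Group G]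

noncomputable def augIdeal : Submodule 𝕂 (MonoidAlgebra 𝕂 G) :=
  LinearMap.ker (augmentation 𝕂 G).toLinearMap

variable {𝕂 G}

theorem augmentation_of (g : G) : augmentation 𝕂 G (MonoidAlgebra.of 𝕂 G g) = 1 := by
  simp [augmentation]

theorem mem_augIdeal {x : MonoidAlgebra 𝕂 G} : x ∈ augIdeal 𝕂 G ↔ augmentation 𝕂 G x = 0 :=
  LinearMap.mem_ker

theorem of_sub_one_mem_augIdeal (g : G) : MonoidAlgebra.of 𝕂 G g - 1 ∈ augIdeal 𝕂 G := by
  rw [mem_augIdeal, map_sub, map_one, augmentation_of, sub_self]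

theorem mul_mem_augIdeal_left {x : MonoidAlgebra 𝕂 G} (hx : x ∈ augIdeal 𝕂 G)
    (y : MonoidAlgebra 𝕂 G) : x * y ∈ augIdeal 𝕂 G := by
  rw [mem_augIdeal] at hx ⊢
  rw [map_mul, hx, zero_mul]

variable (𝕂 G)

theorem augPow_zero : augPow 𝕂 G 0 = ⊤ := if_pos rfl

theorem augPow_succ (n : ℕ) : augPow 𝕂 G (n + 1) = augIdeal 𝕂 G ^ (n + 1) :=
  if_neg n.succ_ne_zero

theorem augPow_one : augPow 𝕂 G 1 = augIdeal 𝕂 G := by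
  rw [augPow_succ, pow_one]

theorem augPow_antitone : Antitone (augPow 𝕂 G) := by
  refine antitone_nat_of_succ_le fun n => ?_
  cases n with
  | zero => exact (augPow_zero 𝕂 G).symm ▸ le_top
  | succ n =>
    rw [augPow_succ, augPow_succ]
    exact Submodule.pow_succ_succ_le_pow_succ
      (Submodule.mul_le.2 fun x hx y _ => mul_mem_augIdeal_left hx y) n

variable {𝕂 G}

theorem mul_mem_augPow_succ_succ {x y : MonoidAlgebra 𝕂 G} {n : ℕ} (hx : x ∈ augIdeal 𝕂 G)
    (hy : y ∈ augPow 𝕂 G (n + 1)) : x * y ∈ augPow 𝕂 G (n + 2) := by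
  rw [augPow_succ] at hy ⊢
  rw [pow_succ' _ (n + 1)]
  exact Submodule.mul_mem_mul hx hy

end Augmentation

section WordNorm

variable {G : Type*} [Group G] {T : Set G}

theorem wordNorm_list_prod_le {l : List G} (hl : ∀ x ∈ l, x ∈ T) :
    wordNorm T l.prod ≤ l.length :=
  Nat.sInf_le ⟨l, hl, rfl, rfl⟩

theorem wordNorm_one : wordNorm T (1 : G) = 0 :=
  Nat.le_zero.1 (wordNorm_list_prod_le (l := []) (by simp))

theorem exists_list_length_eq_wordNorm {g : G} (hg : g ∈ Submonoid.closure T) :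
    ∃ l : List G, (∀ x ∈ l, x ∈ T) ∧ l.length = wordNorm T g ∧ l.prod = g := by
  obtain ⟨l, hl, hprod⟩ := Submonoid.exists_list_of_mem_closure hg
  exact Nat.sInf_mem (s := {n | ∃ l : List G, (∀ x ∈ l, x ∈ T) ∧ l.length = n ∧ l.prod = g})
    ⟨l.length, l, hl, rfl, hprod⟩

theorem wordNorm_mul_le {s g : G} (hs : s ∈ T) (hg : g ∈ Submonoid.closure T) :
    wordNorm T (s * g) ≤ wordNorm T g + 1 := by
  obtain ⟨l, hl, hlen, rfl⟩ := exists_list_length_eq_wordNorm hg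
  rw [← hlen, ← List.prod_cons]
  exact wordNorm_list_prod_le (List.forall_mem_cons.2 ⟨hs, hl⟩)

theorem finite_setOf_wordNorm_le (hT : T.Finite) (hgen : Submonoid.closure T = ⊤) (n : ℕ) :
    {g : G | wordNorm T g ≤ n}.Finite := by
  have : Finite T := hT
  refine ((List.finite_length_le T n).image fun l => (l.map Subtype.val).prod).subset ?_
  intro g hg
  obtain ⟨l, hl, hlen, rfl⟩ := exists_list_length_eq_wordNorm (hgen ▸ Submonoid.mem_top g)
  refine ⟨l.attach.map fun x => ⟨x.1, hl x.1 x.2⟩, by simpa [hlen] using hg, ?_⟩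
  simp

theorem Submonoid.closure_union_inv_eq_top {S : Set G}
    (h : Subgroup.closure (S ∪ S⁻¹) = ⊤) : Submonoid.closure (S ∪ S⁻¹) = ⊤ := by
  rw [← Subgroup.closure_toSubmonoid, ← Subgroup.top_toSubmonoid, ← h, Subgroup.closure_union,
    Subgroup.closure_inv, sup_idem]

end WordNorm

section Growth

variable {𝕂 : Type*} [Field 𝕂] {G : Type*} [Group G] {T : Set G}

variable (𝕂 T) in
noncomputable def wordBallSpan (n : ℕ) : Submodule 𝕂 (MonoidAlgebra 𝕂 G) :=
  Submodule.span 𝕂 (MonoidAlgebra.of 𝕂 G '' {g | wordNorm T g ≤ n})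

theorem of_mul_mem_wordBallSpan_succ (hgen : Submonoid.closure T = ⊤) {s : G} (hs : s ∈ T)
    {n : ℕ} {x : MonoidAlgebra 𝕂 G} (hx : x ∈ wordBallSpan 𝕂 T n) :
    MonoidAlgebra.of 𝕂 G s * x ∈ wordBallSpan 𝕂 T (n + 1) := by
  induction hx using Submodule.span_induction with
  | mem x hx =>
    obtain ⟨g, hg, rfl⟩ := hx
    refine Submodule.subset_span ⟨s * g, ?_, map_mul _ _ _⟩
    exact (wordNorm_mul_le hs (hgen ▸ Submonoid.mem_top g)).trans (Nat.add_le_add_right hg 1)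
  | zero => simp
  | add x y _ _ hx hy => rw [mul_add]; exact add_mem hx hy
  | smul a x _ hx => rw [mul_smul_comm]; exact Submodule.smul_mem _ a hx

theorem sub_one_mul_mem_wordBallSpan_sup_augPow (hgen : Submonoid.closure T = ⊤) {s : G}
    (hs : s ∈ T) {n : ℕ} {x : MonoidAlgebra 𝕂 G}
    (hx : x ∈ wordBallSpan 𝕂 T n ⊔ augPow 𝕂 G (n + 1)) :
    (MonoidAlgebra.of 𝕂 G s - 1) * x ∈ wordBallSpan 𝕂 T (n + 1) ⊔ augPow 𝕂 G (n + 2) := by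
  obtain ⟨m, hm, w, hw, rfl⟩ := Submodule.mem_sup.1 hx
  rw [mul_add, sub_mul, one_mul]
  refine add_mem (Submodule.mem_sup_left (sub_mem ?_ ?_)) (Submodule.mem_sup_right ?_)
  · exact of_mul_mem_wordBallSpan_succ hgen hs hm
  · exact Submodule.span_mono (Set.image_mono fun g hg => Nat.le_succ_of_le hg) hm
  · exact mul_mem_augPow_succ_succ (of_sub_one_mem_augIdeal s) hw

theorem eq_top_of_one_mem_of_sub_one_mul_mem (hgen : Submonoid.closure T = ⊤)
    {N : Submodule 𝕂 (MonoidAlgebra 𝕂 G)} (h1 : 1 ∈ N)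
    (hT : ∀ s ∈ T, ∀ x, (MonoidAlgebra.of 𝕂 G s - 1) * x ∈ N) : N = ⊤ := by
  have hof : ∀ g, MonoidAlgebra.of 𝕂 G g ∈ N := by
    intro g
    induction hgen ▸ Submonoid.mem_top g using Submonoid.closure_induction_left with
    | one => rwa [map_one]
    | mul_left s hs y _ hy =>
      have hsplit : MonoidAlgebra.of 𝕂 G (s * y) =
          MonoidAlgebra.of 𝕂 G y + (MonoidAlgebra.of 𝕂 G s - 1) * MonoidAlgebra.of 𝕂 G y := by
        rw [map_mul]; noncomm_ring
      rw [hsplit]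
      exact add_mem hy (hT s hs _)
  exact Submodule.eq_top_iff'.2 fun x =>
    x.induction_on hof (fun _ _ => add_mem) fun a _ => Submodule.smul_mem _ a

theorem wordBallSpan_sup_augPow_eq_top (hgen : Submonoid.closure T = ⊤) (n : ℕ) :
    wordBallSpan 𝕂 T n ⊔ augPow 𝕂 G (n + 1) = ⊤ := by
  have h1 : ∀ n, (1 : MonoidAlgebra 𝕂 G) ∈ wordBallSpan 𝕂 T n ⊔ augPow 𝕂 G (n + 1) := fun n =>
    Submodule.mem_sup_left (Submodule.subset_span ⟨1, by simp [wordNorm_one], map_one _⟩)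
  induction n with
  | zero =>
    refine eq_top_of_one_mem_of_sub_one_mul_mem hgen (h1 0) fun s _ x => ?_
    rw [augPow_one]
    exact Submodule.mem_sup_right (mul_mem_augIdeal_left (of_sub_one_mem_augIdeal s) x)
  | succ n ih =>
    refine eq_top_of_one_mem_of_sub_one_mul_mem hgen (h1 (n + 1)) fun s hs x => ?_
    exact sub_one_mul_mem_wordBallSpan_sup_augPow hgen hs (ih ▸ Submodule.mem_top)

theorem span_range_mkQ_of_wordNorm_le_eq_top (hgen : Submonoid.closure T = ⊤) (n : ℕ) :
    Submodule.span 𝕂 (Set.range fun g : {g : G // wordNorm T g ≤ n} =>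
      (augPow 𝕂 G (n + 1)).mkQ (MonoidAlgebra.of 𝕂 G g)) = ⊤ := by
  have hrange : (Set.range fun g : {g : G // wordNorm T g ≤ n} =>
      (augPow 𝕂 G (n + 1)).mkQ (MonoidAlgebra.of 𝕂 G g)) =
      (augPow 𝕂 G (n + 1)).mkQ '' (MonoidAlgebra.of 𝕂 G '' {g | wordNorm T g ≤ n}) := by
    ext; simp
  rw [hrange, Submodule.span_image, Submodule.map_mkQ_eq_top, sup_comm]
  exact wordBallSpan_sup_augPow_eq_top hgen n

theorem finiteDimensional_quotient_augPow_succ (hT : T.Finite) (hgen : Submonoid.closure T = ⊤)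
    (n : ℕ) : FiniteDimensional 𝕂 (MonoidAlgebra 𝕂 G ⧸ augPow 𝕂 G (n + 1)) := by
  have : Finite {g : G // wordNorm T g ≤ n} := (finite_setOf_wordNorm_le hT hgen n).to_subtype
  exact Module.Finite.of_surjective _ (LinearMap.range_eq_top.1
    ((Finsupp.range_linearCombination 𝕂).trans (span_range_mkQ_of_wordNorm_le_eq_top hgen n)))

theorem finrank_quotient_augPow_succ_le_growthFn (hT : T.Finite)
    (hgen : Submonoid.closure T = ⊤) (n : ℕ) :
    finrank 𝕂 (MonoidAlgebra 𝕂 G ⧸ augPow 𝕂 G (n + 1)) ≤ growthFn T n := by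
  have : Fintype {g : G // wordNorm T g ≤ n} :=
    (finite_setOf_wordNorm_le hT hgen n).fintype
  rw [growthFn, Nat.card_eq_fintype_card]
  exact finrank_le_of_span_eq_top (span_range_mkQ_of_wordNorm_le_eq_top hgen n)

end Growth

/-- **Dimension lower bound for growth**: let `𝕂` be a field, `G` a group and `S` a finite
subset with `S ∪ S⁻¹` generating `G`. Then each quotient `ϖ^i/ϖ^{i+1}` of consecutive powers
of the augmentation ideal of `𝕂[G]` is finite-dimensional, and
`v_{G,S∪S⁻¹}(n) ≥ Σ_{i=0}^{n} dim_𝕂 (ϖ^i/ϖ^{i+1})`. -/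
theorem growth_ge_sum_dim_augmentation_quotients
    (𝕂 : Type*) [Field 𝕂] {G : Type*} [Group G] (S : Set G)
    (hfin : S.Finite) (hgen : Subgroup.closure (S ∪ S⁻¹) = ⊤) :
    (∀ i : ℕ, FiniteDimensional 𝕂 (augQuot 𝕂 G i)) ∧
    ∀ n : ℕ,
      ∑ i ∈ Finset.range (n + 1), Module.finrank 𝕂 (augQuot 𝕂 G i)
        ≤ growthFn (S ∪ S⁻¹) n := by
  have hT : (S ∪ S⁻¹).Finite := hfin.union hfin.inv
  have hmon := Submonoid.closure_union_inv_eq_top hgen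
  have hfd : ∀ i, FiniteDimensional 𝕂 (MonoidAlgebra 𝕂 G ⧸ augPow 𝕂 G i)
    | 0 => by rw [augPow_zero]; infer_instance
    | i + 1 => finiteDimensional_quotient_augPow_succ hT hmon i
  refine ⟨fun i => inferInstance, fun n => ?_⟩
  rw [Submodule.sum_finrank_quotient_comap_eq_finrank_quotient (augPow_antitone 𝕂 G)
    (augPow_zero 𝕂 G) hfd]
  exact finrank_quotient_augPow_succ_le_growthFn hT hmon n
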